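/- Let c ∈ ℂ with c = a/q + γ, where a, q ∈ ℤ[i] are coprime, q ≠ 0, |γ| ≤ |q|⁻². Then for all z ≥ 1 and all 0 < Δ₁, Δ₂ ≤ 1/2, the number of Gaussian integers n with 0 < |n|² ≤ z, ‖Im(nc)‖ ≤ Δ₁ and ‖Re(nc)‖ ≤ Δ₂ is at most a constant times (1 + z/|q|²)·(1 + Δ₁|q|)·(1 + Δ₂|q|), where ‖x‖ denotes the distance from the real x to the nearest integer. -/

import Mathlib

/-!
Label each Gaussian integer `n` by its cell: the box of side `|q|/6` containing `n`, together with
the box of side `1/(3|q|)` containing the signed distances of `Re(nc)` and `Im(nc)` to the nearest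
integers. Two distinct `n₁, n₂` in one cell give `m = n₁ - n₂` with `0 < |m| < |q|/3` and `mc`
within `2/(3|q|)` of a Gaussian integer `k`. But `mc - k = (ma - qk)/q + mγ`, where `ma - qk ≠ 0`
because `q ∤ m`, so `|mc - k| ≥ 1/|q| - |m|/|q|² > 2/(3|q|)`. Hence the cell map is injective,
and the number of admissible cells is `O((1 + √z/|q|)²(1 + Δ₂|q|)(1 + Δ₁|q|))`.
-/

open Complex GaussianInt

/-- Distance from a real number to the nearest integer. -/
noncomputable def nint (x : ℝ) : ℝ := ⨅ n : ℤ, |x - (n : ℝ)|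

lemma nint_eq_abs_sub_round (x : ℝ) : nint x = |x - round x| :=
  le_antisymm (ciInf_le ⟨0, by rintro y ⟨k, rfl⟩; positivity⟩ _) (le_ciInf (round_le x))

lemma GaussianInt.one_le_norm_toComplex {w : GaussianInt} (hw : w ≠ 0) : 1 ≤ ‖(w : ℂ)‖ := by
  have h : (1 : ℝ) ≤ Complex.normSq w := by
    rw [← intCast_real_norm]; exact_mod_cast GaussianInt.norm_pos.mpr hw
  rw [Complex.normSq_eq_norm_sq] at h
  nlinarith [_root_.norm_nonneg (w : ℂ)]

lemma GaussianInt.norm_toComplex_le_of_dvd {q m : GaussianInt} (hm : m ≠ 0) (h : q ∣ m) :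
    ‖(q : ℂ)‖ ≤ ‖(m : ℂ)‖ := by
  obtain ⟨s, rfl⟩ := h
  have hs : 1 ≤ ‖(s : ℂ)‖ := one_le_norm_toComplex (right_ne_zero_of_mul hm)
  rw [toComplex_mul, norm_mul]
  exact le_mul_of_one_le_right (_root_.norm_nonneg _) hs

lemma le_norm_mul_sub_of_approx {c γ : ℂ} {a q m k : GaussianInt} (hco : IsCoprime a q)
    (hc : c = a / q + γ) (hγ : ‖γ‖ ≤ ‖(q : ℂ)‖⁻¹ ^ 2) (hm0 : m ≠ 0) (hm : ‖(m : ℂ)‖ < ‖(q : ℂ)‖) :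
    (‖(q : ℂ)‖ - ‖(m : ℂ)‖) / ‖(q : ℂ)‖ ^ 2 ≤ ‖(m : ℂ) * c - k‖ := by
  set Q := ‖(q : ℂ)‖
  have hQ : 0 < Q := (_root_.norm_nonneg _).trans_lt hm
  have hq : (q : ℂ) ≠ 0 := norm_pos_iff.mp hQ
  have hnum : m * a - q * k ≠ 0 := fun h0 =>
    hm.not_ge <| norm_toComplex_le_of_dvd hm0 <|
      hco.symm.dvd_of_dvd_mul_right ⟨k, by linear_combination h0⟩
  have hsplit : (m : ℂ) * c - k = ((m * a - q * k : GaussianInt) : ℂ) / q + m * γ := by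
    rw [hc, toComplex_sub, toComplex_mul, toComplex_mul]
    field_simp
    ring
  have hmain : 1 / Q ≤ ‖((m * a - q * k : GaussianInt) : ℂ) / q‖ := by
    rw [norm_div]
    exact div_le_div_of_nonneg_right (one_le_norm_toComplex hnum) hQ.le
  have herr : ‖(m : ℂ) * γ‖ ≤ ‖(m : ℂ)‖ / Q ^ 2 := by
    rw [norm_mul, div_eq_mul_inv, ← inv_pow]
    exact mul_le_mul_of_nonneg_left hγ (_root_.norm_nonneg _)
  calc (Q - ‖(m : ℂ)‖) / Q ^ 2 = 1 / Q - ‖(m : ℂ)‖ / Q ^ 2 := by field_simp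
    _ ≤ ‖((m * a - q * k : GaussianInt) : ℂ) / q‖ - ‖(m : ℂ) * γ‖ := by gcongr
    _ ≤ ‖(m : ℂ) * c - k‖ := by rw [hsplit]; exact norm_sub_le_norm_add _ _

noncomputable def boxIndices (R t : ℝ) : Finset ℤ := Finset.Icc ⌊-R / t⌋ ⌊R / t⌋

lemma floor_div_mem_boxIndices {t x R : ℝ} (ht : 0 < t) (hx : |x| ≤ R) :
    ⌊x / t⌋ ∈ boxIndices R t := by
  rw [abs_le] at hx
  exact Finset.mem_Icc.mpr
    ⟨Int.floor_mono (by gcongr; exact hx.1), Int.floor_mono (by gcongr; exact hx.2)⟩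

lemma card_boxIndices_le {t R : ℝ} (ht : 0 < t) (hR : 0 ≤ R) :
    ((boxIndices R t).card : ℝ) ≤ 2 * R / t + 2 := by
  have hlo := Int.lt_floor_add_one (-R / t)
  have hhi := Int.floor_le (R / t)
  have hpos : 0 ≤ 2 * R / t := by positivity
  rw [boxIndices, Int.card_Icc, ← Int.cast_natCast, Int.toNat_eq_max]
  push_cast
  refine max_le ?_ (by linarith)
  linarith [neg_div t R, show 2 * R / t = R / t + R / t by ring]

lemma abs_sub_lt_of_floor_div_eq {t x y : ℝ} (ht : 0 < t) (h : ⌊x / t⌋ = ⌊y / t⌋) :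
    |x - y| < t := by
  have h1 := Int.abs_sub_lt_one_of_floor_eq_floor h
  rwa [div_sub_div_same, abs_div, abs_of_pos ht, div_lt_one ht] at h1

noncomputable def cell (c : ℂ) (t δ : ℝ) (n : GaussianInt) : ℤ × ℤ × ℤ × ℤ :=
  (⌊(n.re : ℝ) / t⌋, ⌊(n.im : ℝ) / t⌋,
    ⌊(((n : ℂ) * c).re - round ((n : ℂ) * c).re) / δ⌋,
    ⌊(((n : ℂ) * c).im - round ((n : ℂ) * c).im) / δ⌋)

lemma cell_mem {c : ℂ} {t δ R Δ₁ Δ₂ : ℝ} (ht : 0 < t) (hδ : 0 < δ) {n : GaussianInt}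
    (hn : ‖(n : ℂ)‖ ≤ R) (h₁ : nint ((n : ℂ) * c).im ≤ Δ₁) (h₂ : nint ((n : ℂ) * c).re ≤ Δ₂) :
    cell c t δ n ∈
      boxIndices R t ×ˢ boxIndices R t ×ˢ boxIndices Δ₂ δ ×ˢ boxIndices Δ₁ δ := by
  rw [nint_eq_abs_sub_round] at h₁ h₂
  simp only [cell, Finset.mem_product]
  refine ⟨floor_div_mem_boxIndices ht ?_, floor_div_mem_boxIndices ht ?_,
    floor_div_mem_boxIndices hδ h₂, floor_div_mem_boxIndices hδ h₁⟩
  · rw [GaussianInt.intCast_re]; exact (abs_re_le_norm _).trans hn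
  · rw [GaussianInt.intCast_im]; exact (abs_im_le_norm _).trans hn

lemma norm_sub_lt_of_cell_eq {c : ℂ} {t δ : ℝ} (ht : 0 < t) (hδ : 0 < δ) {n₁ n₂ : GaussianInt}
    (h : cell c t δ n₁ = cell c t δ n₂) :
    ‖((n₁ - n₂ : GaussianInt) : ℂ)‖ < 2 * t ∧
      ∃ k : GaussianInt, ‖((n₁ - n₂ : GaussianInt) : ℂ) * c - k‖ < 2 * δ := by
  simp only [cell, Prod.mk.injEq] at h
  obtain ⟨hre, him, hcre, hcim⟩ := h
  refine ⟨?_, ⟨round ((n₁ : ℂ) * c).re - round ((n₂ : ℂ) * c).re,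
    round ((n₁ : ℂ) * c).im - round ((n₂ : ℂ) * c).im⟩, ?_⟩
  · refine (norm_le_abs_re_add_abs_im _).trans_lt ?_
    have := abs_sub_lt_of_floor_div_eq ht hre
    have := abs_sub_lt_of_floor_div_eq ht him
    simp only [toComplex_sub, sub_re, sub_im, ← GaussianInt.intCast_re, ← GaussianInt.intCast_im]
    linarith
  · refine (norm_le_abs_re_add_abs_im _).trans_lt ?_
    have := abs_sub_lt_of_floor_div_eq hδ hcre
    have := abs_sub_lt_of_floor_div_eq hδ hcim
    simp only [toComplex_sub, sub_mul, sub_re, sub_im, re_toComplex, im_toComplex, Int.cast_sub,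
      sub_sub_sub_comm _ _ (round _ : ℝ)]
    linarith

lemma cell_injective {c γ : ℂ} {a q : GaussianInt} (hq : q ≠ 0) (hco : IsCoprime a q)
    (hc : c = a / q + γ) (hγ : ‖γ‖ ≤ ‖(q : ℂ)‖⁻¹ ^ 2) :
    Function.Injective (cell c (‖(q : ℂ)‖ / 6) (1 / (3 * ‖(q : ℂ)‖))) := by
  set Q := ‖(q : ℂ)‖
  have hQ : 0 < Q := zero_lt_one.trans_le (one_le_norm_toComplex hq)
  intro n₁ n₂ h
  by_contra hne
  obtain ⟨hm, k, hk⟩ := norm_sub_lt_of_cell_eq (by positivity) (by positivity) h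
  have hsep := le_norm_mul_sub_of_approx (k := k) hco hc hγ (sub_ne_zero.mpr hne) (by linarith)
  have : 2 * (1 / (3 * Q)) < (Q - ‖((n₁ - n₂ : GaussianInt) : ℂ)‖) / Q ^ 2 := by
    rw [lt_div_iff₀ (by positivity)]
    field_simp
    linarith
  linarith

lemma box_count_le {Q z Δ₁ Δ₂ : ℝ} (hQ : 0 < Q) (hz : 0 ≤ z) (hΔ₁ : 0 ≤ Δ₁) (hΔ₂ : 0 ≤ Δ₂) :
    (2 * √z / (Q / 6) + 2) ^ 2 * (2 * Δ₂ / (1 / (3 * Q)) + 2) * (2 * Δ₁ / (1 / (3 * Q)) + 2) ≤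
      10368 * (1 + z / Q ^ 2) * (1 + Δ₁ * Q) * (1 + Δ₂ * Q) := by
  have hx : (2 * √z / (Q / 6) + 2) ^ 2 ≤ 288 * (1 + z / Q ^ 2) := by
    have hsq : (√z / Q) ^ 2 = z / Q ^ 2 := by rw [div_pow, Real.sq_sqrt hz]
    have hx0 : 0 ≤ √z / Q := by positivity
    rw [show 2 * √z / (Q / 6) = 12 * (√z / Q) by field_simp; ring, ← hsq]
    nlinarith [sq_nonneg (12 * (√z / Q) - 2)]
  have hΔ : ∀ Δ, 0 ≤ Δ → 2 * Δ / (1 / (3 * Q)) + 2 ≤ 6 * (1 + Δ * Q) := fun Δ hΔ => by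
    rw [div_div_eq_mul_div, div_one]
    nlinarith
  calc _ ≤ 288 * (1 + z / Q ^ 2) * (6 * (1 + Δ₂ * Q)) * (6 * (1 + Δ₁ * Q)) := by
        gcongr
        exacts [hΔ Δ₂ hΔ₂, hΔ Δ₁ hΔ₁]
    _ = _ := by ring

/-- Counting Gaussian integers `n` with `0 < |n|² ≤ z` for which both `‖Im(nc)‖ ≤ Δ₁` and
`‖Re(nc)‖ ≤ Δ₂`, when `c = a/q + γ` is well approximated by the Gaussian rational `a/q`:
the count is `O((1 + z/|q|²)(1 + Δ₁|q|)(1 + Δ₂|q|))`. -/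
theorem gaussian_counting_bound :
    ∃ C : ℝ, 0 < C ∧ ∀ c γ : ℂ, ∀ a q : GaussianInt, q ≠ 0 → IsCoprime a q →
      c = (a : ℂ) / (q : ℂ) + γ → ‖γ‖ ≤ (‖(q : ℂ)‖)⁻¹ ^ 2 →
      ∀ z Δ₁ Δ₂ : ℝ, 1 ≤ z → 0 < Δ₁ → Δ₁ ≤ 1 / 2 → 0 < Δ₂ → Δ₂ ≤ 1 / 2 →
      ({n : GaussianInt | 0 < ‖(n : ℂ)‖ ^ 2 ∧ ‖(n : ℂ)‖ ^ 2 ≤ z ∧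
          nint (((n : ℂ) * c).im) ≤ Δ₁ ∧ nint (((n : ℂ) * c).re) ≤ Δ₂}.ncard : ℝ) ≤
        C * (1 + z / ‖(q : ℂ)‖ ^ 2) * (1 + Δ₁ * ‖(q : ℂ)‖) *
          (1 + Δ₂ * ‖(q : ℂ)‖) := by
  refine ⟨10368, by norm_num, ?_⟩
  intro c γ a q hq hco hc hγ z Δ₁ Δ₂ hz hΔ₁ _ hΔ₂ _
  set Q := ‖(q : ℂ)‖
  have hQ : 0 < Q := zero_lt_one.trans_le (one_le_norm_toComplex hq)
  have ht : 0 < Q / 6 := by positivity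
  have hδ : 0 < 1 / (3 * Q) := by positivity
  set T := boxIndices √z (Q / 6) ×ˢ boxIndices √z (Q / 6) ×ˢ
    boxIndices Δ₂ (1 / (3 * Q)) ×ˢ boxIndices Δ₁ (1 / (3 * Q))
  have hJ := card_boxIndices_le ht (Real.sqrt_nonneg z)
  calc _ ≤ ((T : Set (ℤ × ℤ × ℤ × ℤ)).ncard : ℝ) := Nat.cast_le.mpr <|
        Set.ncard_le_ncard_of_injOn _
          (fun _ hn => cell_mem ht hδ ((le_abs_self _).trans (Real.abs_le_sqrt hn.2.1))
            hn.2.2.1 hn.2.2.2)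
          (cell_injective hq hco hc hγ).injOn T.finite_toSet
    _ = T.card := by rw [Set.ncard_coe_finset]
    _ ≤ (2 * √z / (Q / 6) + 2) ^ 2 * (2 * Δ₂ / (1 / (3 * Q)) + 2) *
        (2 * Δ₁ / (1 / (3 * Q)) + 2) := by
      simp only [T, Finset.card_product, Nat.cast_mul]
      rw [sq, ← mul_assoc, ← mul_assoc]
      gcongr
      exacts [card_boxIndices_le hδ hΔ₂.le, card_boxIndices_le hδ hΔ₁.le]
    _ ≤ _ := box_count_le hQ (by linarith) hΔ₁.le hΔ₂.le
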